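/- arXiv:1911.02192 — 2 statements merged into one kernel-verified Lean document; each statement's English description precedes it below -/
import Mathlib

section
/- If the design ξ* is D-optimal, i.e. det M(ξ*) ≥ det M(ξ) for every design ξ, then Tr( M(ξ*)⁻¹ M(ξ) ) ≤ p for every design ξ. -/
/-!
Along the segment of designs `ξ_t = (1 - t) ξ* + t ξ`, the information matrix is affine:
`M(ξ_t) = A + t (B - A)` with `A = M(ξ*)`, `B = M(ξ)`. Factoring out `A`, which is positive
definite because `C` is, gives `det M(ξ_t) = det A · det (1 + t A⁻¹(B - A))`, and
`det (1 + t N) = 1 + t tr N + O(t²)`. D-optimality makes this at most `det A` for `t ∈ (0, 1]`,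
so `tr (A⁻¹(B - A)) ≤ 0`, i.e. `tr (A⁻¹ B) ≤ p`.
-/

open MeasureTheory Matrix

/-- The information matrix `M(ξ) = ∫_X g(z) g(z)ᵀ dξ(z) + C` of a design `ξ`
(a Borel probability measure on `X ⊆ ℝ^d`), defined entrywise. -/
noncomputable def infoMatrix {d p : ℕ} {X : Set (Fin d → ℝ)}
    (g : (Fin d → ℝ) → Fin p → ℝ) (C : Matrix (Fin p) (Fin p) ℝ)
    (ξ : Measure X) : Matrix (Fin p) (Fin p) ℝ :=
  Matrix.of fun i j => (∫ z, g (z : Fin d → ℝ) i * g (z : Fin d → ℝ) j ∂ξ) + C i j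

/-- The prediction variance `d(z,ξ) = g(z)ᵀ M(ξ)⁻¹ g(z)`. -/
noncomputable def predVar {d p : ℕ} {X : Set (Fin d → ℝ)}
    (g : (Fin d → ℝ) → Fin p → ℝ) (C : Matrix (Fin p) (Fin p) ℝ)
    (ξ : Measure X) (z : Fin d → ℝ) : ℝ :=
  g z ⬝ᵥ ((infoMatrix g C ξ)⁻¹ *ᵥ g z)

namespace Matrix

variable {n : Type*} [Fintype n] [DecidableEq n]

theorem trace_nonpos_of_det_one_add_smul_le_one {M : Matrix n n ℝ}
    (h : ∀ t ∈ Set.Ioc (0 : ℝ) 1, det (1 + t • M) ≤ 1) : trace M ≤ 0 := by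
  set q := (det (1 + (Polynomial.X : Polynomial ℝ) • M.map Polynomial.C)).divX.divX
  have hbound : ∀ t ∈ Set.Ioc (0 : ℝ) 1, trace M ≤ -(q.eval t * t) := by
    intro t ht
    have h1 := h t ht
    rw [det_one_add_smul] at h1
    have hlin : (trace M + q.eval t * t) * t ≤ 0 := by nlinarith
    nlinarith [nonpos_of_mul_nonpos_left hlin ht.1]
  have hlim : Filter.Tendsto (fun t : ℝ => -(q.eval t * t)) (nhdsWithin 0 (Set.Ioi 0))
      (nhds 0) := by
    have hc : Continuous fun t : ℝ => -(q.eval t * t) := by fun_prop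
    simpa using (hc.tendsto 0).mono_left nhdsWithin_le_nhds
  refine ge_of_tendsto hlim ?_
  filter_upwards [Ioc_mem_nhdsGT zero_lt_one] with t ht using hbound t ht

theorem trace_inv_mul_le_card_of_det_lineMap_le {A B : Matrix n n ℝ} (hA : 0 < A.det)
    (h : ∀ t ∈ Set.Ioc (0 : ℝ) 1, det (A + t • (B - A)) ≤ det A) :
    trace (A⁻¹ * B) ≤ Fintype.card n := by
  have hAunit : IsUnit A.det := hA.ne'.isUnit
  have hM : trace (A⁻¹ * (B - A)) ≤ 0 := by
    refine trace_nonpos_of_det_one_add_smul_le_one fun t ht => ?_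
    have hfactor : A + t • (B - A) = A * (1 + t • (A⁻¹ * (B - A))) := by
      rw [mul_add, mul_one, Matrix.mul_smul, mul_nonsing_inv_cancel_left _ _ hAunit]
    have hdet := h t ht
    rw [hfactor, det_mul] at hdet
    nlinarith
  rw [mul_sub, nonsing_inv_mul _ hAunit, trace_sub, trace_one] at hM
  linarith

end Matrix

section GramIntegral

variable {α : Type*} [MeasurableSpace α] {n : Type*} [Fintype n]

theorem posSemidef_of_integral_mul {μ : Measure α} {f : α → n → ℝ}
    (hf : ∀ i j, Integrable (fun z => f z i * f z j) μ) :
    (Matrix.of fun i j => ∫ z, f z i * f z j ∂μ).PosSemidef := by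
  refine posSemidef_iff_dotProduct_mulVec.mpr ⟨?_, fun x => ?_⟩
  · ext i j
    simp only [conjTranspose_apply, of_apply, star_trivial, mul_comm]
  have hint : ∀ i j, Integrable (fun z => x i * x j * (f z i * f z j)) μ :=
    fun i j => (hf i j).const_mul _
  have hquad : x ⬝ᵥ ((Matrix.of fun i j => ∫ z, f z i * f z j ∂μ) *ᵥ x)
      = ∫ z, (x ⬝ᵥ f z) ^ 2 ∂μ := calc
    _ = ∑ i, ∑ j, ∫ z, x i * x j * (f z i * f z j) ∂μ := by
      simp only [dotProduct, mulVec, of_apply, Finset.mul_sum, integral_const_mul]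
      exact Finset.sum_congr rfl fun i _ => Finset.sum_congr rfl fun j _ => by ring
    _ = ∫ z, ∑ i, ∑ j, x i * x j * (f z i * f z j) ∂μ := by
      rw [integral_finsetSum _ fun i _ => integrable_finsetSum _ fun j _ => hint i j]
      exact Finset.sum_congr rfl fun i _ => (integral_finsetSum _ fun j _ => hint i j).symm
    _ = ∫ z, (x ⬝ᵥ f z) ^ 2 ∂μ := by
      congr 1 with z
      simp only [dotProduct, sq, Finset.sum_mul_sum]
      exact Finset.sum_congr rfl fun i _ => Finset.sum_congr rfl fun j _ => by ring
  rw [star_trivial, hquad]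
  exact integral_nonneg fun z => sq_nonneg _

end GramIntegral

section InfoMatrix

open unitInterval

variable {d p : ℕ} {X : Set (Fin d → ℝ)} {g : (Fin d → ℝ) → Fin p → ℝ}

theorem integrable_mul_of_isCompact (hX : IsCompact X) (hg : Continuous g)
    (ξ : Measure X) [IsFiniteMeasure ξ] (i j : Fin p) :
    Integrable (fun z : X => g z i * g z j) ξ := by
  have : CompactSpace X := isCompact_iff_compactSpace.mp hX
  exact Continuous.integrable_of_hasCompactSupport (by fun_prop)
    (HasCompactSupport.of_compactSpace _)

theorem infoMatrix_posDef (hX : IsCompact X) (hg : Continuous g)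
    {C : Matrix (Fin p) (Fin p) ℝ} (hC : C.PosDef) (ξ : Measure X) [IsFiniteMeasure ξ] :
    (infoMatrix g C ξ).PosDef :=
  PosDef.posSemidef_add (posSemidef_of_integral_mul (integrable_mul_of_isCompact hX hg ξ)) hC

theorem infoMatrix_mixture (hX : IsCompact X) (hg : Continuous g)
    (C : Matrix (Fin p) (Fin p) ℝ) (ξ₀ ξ₁ : Measure X) [IsFiniteMeasure ξ₀]
    [IsFiniteMeasure ξ₁] (t : I) :
    infoMatrix g C (toNNReal t • ξ₁ + toNNReal (σ t) • ξ₀)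
      = infoMatrix g C ξ₀ + (t : ℝ) • (infoMatrix g C ξ₁ - infoMatrix g C ξ₀) := by
  ext i j
  simp only [infoMatrix, of_apply, Matrix.add_apply, Matrix.smul_apply, Matrix.sub_apply,
    smul_eq_mul]
  rw [integral_add_measure ((integrable_mul_of_isCompact hX hg ξ₁ i j).smul_measure_nnreal)
      ((integrable_mul_of_isCompact hX hg ξ₀ i j).smul_measure_nnreal),
    integral_smul_nnreal_measure, integral_smul_nnreal_measure]
  simp only [NNReal.smul_def, coe_toNNReal, coe_symm_eq, smul_eq_mul]
  ring

end InfoMatrix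

theorem trace_le_of_DOptimal_general {d p : ℕ}
    {X : Set (Fin d → ℝ)} (hX : IsCompact X)
    {g : (Fin d → ℝ) → Fin p → ℝ} (hg : Continuous g)
    {C : Matrix (Fin p) (Fin p) ℝ} (hC : C.PosDef)
    (ξstar : Measure X) [IsProbabilityMeasure ξstar]
    (hopt : ∀ ξ : Measure X, IsProbabilityMeasure ξ →
      (infoMatrix g C ξ).det ≤ (infoMatrix g C ξstar).det) :
    ∀ ξ : Measure X, IsProbabilityMeasure ξ →
      Matrix.trace ((infoMatrix g C ξstar)⁻¹ * infoMatrix g C ξ) ≤ (p : ℝ) := by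
  intro ξ _
  have hdet := (infoMatrix_posDef hX hg hC ξstar).det_pos
  simpa using trace_inv_mul_le_card_of_det_lineMap_le hdet fun t ht => by
    let s : unitInterval := ⟨t, Set.Ioc_subset_Icc_self ht⟩
    simpa [s, infoMatrix_mixture hX hg C ξstar ξ s] using
      hopt (unitInterval.toNNReal s • ξ + unitInterval.toNNReal (unitInterval.symm s) • ξstar)
        inferInstance

/-- If `ξ*` is D-optimal then `Tr(M(ξ*)⁻¹ M(ξ)) ≤ p` for every design `ξ`. -/
theorem trace_le_of_DOptimal {d p : ℕ} (hd : 1 ≤ d) (hp : 1 ≤ p)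
    {X : Set (Fin d → ℝ)} (hX : IsCompact X)
    {g : (Fin d → ℝ) → Fin p → ℝ} (hg : Continuous g)
    {C : Matrix (Fin p) (Fin p) ℝ} (hC : C.PosDef)
    (ξstar : Measure X) [IsProbabilityMeasure ξstar]
    (hopt : ∀ ξ : Measure X, IsProbabilityMeasure ξ →
      (infoMatrix g C ξ).det ≤ (infoMatrix g C ξstar).det) :
    ∀ ξ : Measure X, IsProbabilityMeasure ξ →
      Matrix.trace ((infoMatrix g C ξstar)⁻¹ * infoMatrix g C ξ) ≤ (p : ℝ) :=
  trace_le_of_DOptimal_general hX hg hC ξstar hopt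
end

section
/- (Equivalence Theorem on manifolds, 1 ⇒ 3.) If the design ξ* is D-optimal, i.e. det M(ξ*) ≥ det M(ξ) for every design ξ, then its maximum prediction variance attains the lower bound: sup_{z ∈ X} d(z,ξ*) = p − Tr( M(ξ*)⁻¹ C ), where d(z,ξ*) = g(z)ᵀ M(ξ*)⁻¹ g(z). -/
open MeasureTheory Matrix

/-!
D-optimality makes `ξ*` a maximiser of `det M` along every segment of designs. The one-sided
derivative of `det M` at `ξ*` towards the Dirac design `δ_z` is
`det M(ξ*) · tr(M(ξ*)⁻¹ (M(δ_z) − M(ξ*))) = det M(ξ*) · (d(z,ξ*) + tr(M(ξ*)⁻¹ C) − p)`, so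
`d(·,ξ*) ≤ p − tr(M(ξ*)⁻¹ C)` on `X`. On the other hand the `ξ*`-mean of `d(·,ξ*)` is
`tr(M(ξ*)⁻¹ (M(ξ*) − C)) = p − tr(M(ξ*)⁻¹ C)`, and a function bounded by its mean has that
mean as its supremum.
-/

open Filter Topology
open scoped NNReal

namespace Matrix

variable {n : Type*} [Fintype n]

theorem trace_inv_mul_nonpos_of_det_add_smul_le [DecidableEq n] {A B : Matrix n n ℝ}
    (hA : 0 < A.det) (h : ∀ᶠ t in 𝓝[>] (0 : ℝ), (A + t • B).det ≤ A.det) : trace (A⁻¹ * B) ≤ 0 := by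
  -- `det (A + t • B) = det A * (1 + t * trace (A⁻¹ * B) + O(t²))`
  obtain ⟨Q, hQ⟩ : ∃ Q : Polynomial ℝ, ∀ t : ℝ,
      (1 + t • (A⁻¹ * B)).det = 1 + trace (A⁻¹ * B) * t + Q.eval t * t ^ 2 :=
    ⟨_, fun t => det_one_add_smul t _⟩
  have hlim : Tendsto (fun t => trace (A⁻¹ * B) + Q.eval t * t) (𝓝[>] 0)
      (𝓝 (trace (A⁻¹ * B))) := by
    have hcont : Continuous fun t => trace (A⁻¹ * B) + Q.eval t * t := by fun_prop
    simpa using (hcont.tendsto 0).mono_left nhdsWithin_le_nhds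
  refine le_of_tendsto hlim ?_
  filter_upwards [h, self_mem_nhdsWithin] with t ht (htpos : 0 < t)
  have hfac : A + t • B = A * (1 + t • (A⁻¹ * B)) := by
    rw [mul_add, mul_one, Matrix.mul_smul, ← Matrix.mul_assoc, mul_nonsing_inv _ hA.ne'.isUnit,
      Matrix.one_mul]
  rw [hfac, det_mul, hQ] at ht
  have hquad : trace (A⁻¹ * B) * t + Q.eval t * t ^ 2 ≤ 0 := by nlinarith
  nlinarith

theorem dotProduct_mulVec_self_eq_sum (B : Matrix n n ℝ) (u : n → ℝ) :
    u ⬝ᵥ (B *ᵥ u) = ∑ i, ∑ j, B i j * (u j * u i) := by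
  simp only [dotProduct, mulVec, Finset.mul_sum]
  exact Finset.sum_congr rfl fun i _ => Finset.sum_congr rfl fun j _ => by ring

end Matrix

open Matrix

section MomentMatrix

variable {α ι : Type*} [MeasurableSpace α] {f : α → ι → ℝ} {μ ν : Measure α}

noncomputable def momentMatrix (f : α → ι → ℝ) (μ : Measure α) : Matrix ι ι ℝ :=
  Matrix.of fun i j => ∫ a, f a i * f a j ∂μ

theorem integrable_mul_apply_of_continuous [TopologicalSpace α] [OpensMeasurableSpace α]
    [CompactSpace α] [IsFiniteMeasure μ] (hf : Continuous f) (i j : ι) :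
    Integrable (fun a => f a i * f a j) μ :=
  Continuous.integrable_of_hasCompactSupport (by fun_prop) (.of_compactSpace _)

theorem momentMatrix_dirac [MeasurableSingletonClass α] (a : α) :
    momentMatrix f (Measure.dirac a) = vecMulVec (f a) (f a) := by
  ext i j
  simp [momentMatrix, vecMulVec_apply]

theorem momentMatrix_add_measure (hμ : ∀ i j, Integrable (fun a => f a i * f a j) μ)
    (hν : ∀ i j, Integrable (fun a => f a i * f a j) ν) :
    momentMatrix f (μ + ν) = momentMatrix f μ + momentMatrix f ν := by
  ext i j
  exact integral_add_measure (hμ i j) (hν i j)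

theorem momentMatrix_smul_measure (c : ℝ≥0) :
    momentMatrix f (c • μ) = (c : ℝ) • momentMatrix f μ := by
  ext i j
  exact integral_smul_nnreal_measure _ _

variable [Fintype ι]

theorem integrable_dotProduct_mulVec (hf : ∀ i j, Integrable (fun a => f a i * f a j) μ)
    (B : Matrix ι ι ℝ) :
    Integrable (fun a => f a ⬝ᵥ (B *ᵥ f a)) μ := by
  simp_rw [dotProduct_mulVec_self_eq_sum]
  exact integrable_finsetSum _ fun i _ =>
    integrable_finsetSum _ fun j _ => (hf j i).const_mul (B i j)

theorem integral_dotProduct_mulVec (hf : ∀ i j, Integrable (fun a => f a i * f a j) μ)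
    (B : Matrix ι ι ℝ) :
    ∫ a, f a ⬝ᵥ (B *ᵥ f a) ∂μ = trace (B * momentMatrix f μ) := by
  simp_rw [dotProduct_mulVec_self_eq_sum]
  rw [integral_finsetSum _ fun i _ =>
    integrable_finsetSum _ fun j _ => (hf j i).const_mul (B i j)]
  refine Finset.sum_congr rfl fun i _ => ?_
  rw [integral_finsetSum _ fun j _ => (hf j i).const_mul (B i j)]
  exact Finset.sum_congr rfl fun j _ => integral_const_mul _ _

theorem posSemidef_momentMatrix (hf : ∀ i j, Integrable (fun a => f a i * f a j) μ) :
    (momentMatrix f μ).PosSemidef := by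
  have hsymm : (momentMatrix f μ).IsHermitian := by
    ext i j
    simp only [conjTranspose_apply, momentMatrix, of_apply, star_trivial, mul_comm]
  refine posSemidef_iff_dotProduct_mulVec.2 ⟨hsymm, fun x => ?_⟩
  have hquad : star x ⬝ᵥ (momentMatrix f μ *ᵥ x) = ∫ a, (x ⬝ᵥ f a) ^ 2 ∂μ := by
    calc star x ⬝ᵥ (momentMatrix f μ *ᵥ x) = trace (vecMulVec x x * momentMatrix f μ) := by
          rw [star_trivial, trace_mul_comm, mul_vecMulVec, trace_vecMulVec, dotProduct_comm]
      _ = ∫ a, f a ⬝ᵥ (vecMulVec x x *ᵥ f a) ∂μ := (integral_dotProduct_mulVec hf _).symm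
      _ = ∫ a, (x ⬝ᵥ f a) ^ 2 ∂μ := by
          simp [vecMulVec_mulVec, dotProduct_comm x, sq]
  exact hquad ▸ integral_nonneg fun a => sq_nonneg _

end MomentMatrix

theorem ciSup_eq_of_forall_le_of_integral_eq {α : Type*} [MeasurableSpace α] (μ : Measure α)
    [IsProbabilityMeasure μ] {f : α → ℝ} {c : ℝ} (hf : Integrable f μ) (hle : ∀ a, f a ≤ c)
    (hint : ∫ a, f a ∂μ = c) : ⨆ a, f a = c := by
  have := nonempty_of_isProbabilityMeasure μ
  refine le_antisymm (ciSup_le hle) ?_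
  calc c = ∫ a, f a ∂μ := hint.symm
    _ ≤ ∫ _, ⨆ a, f a ∂μ :=
      integral_mono hf (integrable_const _) (le_ciSup ⟨c, Set.forall_mem_range.2 hle⟩)
    _ = ⨆ a, f a := by simp

section Design

open unitInterval

variable {d p : ℕ} {X : Set (Fin d → ℝ)} {g : (Fin d → ℝ) → Fin p → ℝ}
  {C : Matrix (Fin p) (Fin p) ℝ}

theorem infoMatrix_eq_momentMatrix_add (ξ : Measure X) :
    infoMatrix g C ξ = momentMatrix (fun z : X => g z) ξ + C :=
  rfl

theorem posDef_infoMatrix (hC : C.PosDef) {ξ : Measure X}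
    (hξ : ∀ i j, Integrable (fun z : X => g z i * g z j) ξ) : (infoMatrix g C ξ).PosDef :=
  PosDef.posSemidef_add (posSemidef_momentMatrix hξ) hC

theorem infoMatrix_convexComb {ξ ν : Measure X}
    (hξ : ∀ i j, Integrable (fun z : X => g z i * g z j) ξ)
    (hν : ∀ i j, Integrable (fun z : X => g z i * g z j) ν) (t : I) :
    infoMatrix g C (toNNReal t • ν + toNNReal (σ t) • ξ)
      = infoMatrix g C ξ + (t : ℝ) • (infoMatrix g C ν - infoMatrix g C ξ) := by
  simp only [infoMatrix_eq_momentMatrix_add,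
    momentMatrix_add_measure (fun i j => (hν i j).smul_measure_nnreal)
      (fun i j => (hξ i j).smul_measure_nnreal),
    momentMatrix_smul_measure, coe_toNNReal, coe_symm_eq]
  module

theorem trace_inv_mul_infoMatrix_dirac (ξ : Measure X) (z : X) :
    trace ((infoMatrix g C ξ)⁻¹ * infoMatrix g C (Measure.dirac z))
      = predVar g C ξ z + trace ((infoMatrix g C ξ)⁻¹ * C) := by
  rw [infoMatrix_eq_momentMatrix_add (ξ := Measure.dirac z), momentMatrix_dirac, mul_add,
    trace_add, mul_vecMulVec, trace_vecMulVec, dotProduct_comm]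
  rfl

theorem integral_predVar {ξ : Measure X} (hξ : ∀ i j, Integrable (fun z : X => g z i * g z j) ξ)
    (hM : IsUnit (infoMatrix g C ξ).det) :
    ∫ z, predVar g C ξ z ∂ξ = p - trace ((infoMatrix g C ξ)⁻¹ * C) := by
  refine (integral_dotProduct_mulVec hξ _).trans ?_
  rw [eq_sub_of_add_eq (infoMatrix_eq_momentMatrix_add ξ).symm, mul_sub, trace_sub,
    nonsing_inv_mul _ hM, trace_one, Fintype.card_fin]

theorem predVar_le_of_forall_det_le [CompactSpace X] (hg : Continuous g) (hC : C.PosDef)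
    (ξ : Measure X) [IsProbabilityMeasure ξ]
    (hopt : ∀ ν : Measure X, IsProbabilityMeasure ν →
      (infoMatrix g C ν).det ≤ (infoMatrix g C ξ).det) (z : X) :
    predVar g C ξ z ≤ p - trace ((infoMatrix g C ξ)⁻¹ * C) := by
  set M := infoMatrix g C ξ
  have hint (ν : Measure X) [IsFiniteMeasure ν] (i j : Fin p) :
      Integrable (fun z : X => g z i * g z j) ν :=
    integrable_mul_apply_of_continuous (by fun_prop) i j
  have hM : M.PosDef := posDef_infoMatrix hC (hint ξ)
  have hdet : ∀ᶠ t in 𝓝[>] (0 : ℝ),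
      (M + t • (infoMatrix g C (Measure.dirac z) - M)).det ≤ M.det := by
    filter_upwards [Ioc_mem_nhdsGT zero_lt_one] with t ht
    rw [← infoMatrix_convexComb (hint ξ) (hint _) ⟨t, ht.1.le, ht.2⟩]
    exact hopt _ inferInstance
  have htr := trace_inv_mul_nonpos_of_det_add_smul_le hM.det_pos hdet
  rw [mul_sub, trace_sub, trace_inv_mul_infoMatrix_dirac,
    nonsing_inv_mul _ hM.det_pos.ne'.isUnit, trace_one, Fintype.card_fin] at htr
  linarith

end Design

theorem iSup_predVar_of_DOptimal_general {d p : ℕ}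
    {X : Set (Fin d → ℝ)} (hX : IsCompact X)
    {g : (Fin d → ℝ) → Fin p → ℝ} (hg : Continuous g)
    {C : Matrix (Fin p) (Fin p) ℝ} (hC : C.PosDef)
    (ξstar : Measure X) [IsProbabilityMeasure ξstar]
    (hopt : ∀ ξ : Measure X, IsProbabilityMeasure ξ →
      (infoMatrix g C ξ).det ≤ (infoMatrix g C ξstar).det) :
    (⨆ z : X, predVar g C ξstar (z : Fin d → ℝ))
      = (p : ℝ) - Matrix.trace ((infoMatrix g C ξstar)⁻¹ * C) := by
  have := isCompact_iff_compactSpace.mp hX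
  have hint : ∀ i j, Integrable (fun z : X => g z i * g z j) ξstar :=
    integrable_mul_apply_of_continuous (by fun_prop)
  exact ciSup_eq_of_forall_le_of_integral_eq ξstar (integrable_dotProduct_mulVec hint _)
    (predVar_le_of_forall_det_le hg hC ξstar hopt)
    (integral_predVar hint (posDef_infoMatrix hC hint).det_pos.ne'.isUnit)

/-- Equivalence theorem on manifolds, 1 ⇒ 3: a D-optimal design attains the lower bound
for the maximum prediction variance, `sup_{z ∈ X} d(z,ξ*) = p − Tr(M(ξ*)⁻¹ C)`. -/
theorem iSup_predVar_of_DOptimal {d p : ℕ} (hd : 1 ≤ d) (hp : 1 ≤ p)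
    {X : Set (Fin d → ℝ)} (hX : IsCompact X)
    {g : (Fin d → ℝ) → Fin p → ℝ} (hg : Continuous g)
    {C : Matrix (Fin p) (Fin p) ℝ} (hC : C.PosDef)
    (ξstar : Measure X) [IsProbabilityMeasure ξstar]
    (hopt : ∀ ξ : Measure X, IsProbabilityMeasure ξ →
      (infoMatrix g C ξ).det ≤ (infoMatrix g C ξstar).det) :
    (⨆ z : X, predVar g C ξstar (z : Fin d → ℝ))
      = (p : ℝ) - Matrix.trace ((infoMatrix g C ξstar)⁻¹ * C) :=
  iSup_predVar_of_DOptimal_general hX hg hC ξstar hopt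
end
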